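/- If n diagonal matrices D¹,…,Dⁿ have diagonal entries drawn independently from a continuous distribution (formally: if for each pair a ≠ b the vectors (Dⁱ_{aa})ᵢ and (Dⁱ_{bb})ᵢ are not proportional), then Γ_{ab}Γ_{ba} > 1 for all a ≠ b, and hence H̃ has exactly p zero eigenvalues and p² − p strictly positive eigenvalues. -/

import Mathlib

/-!
Write `rᵢ = Dⁱ_{aa} / Dⁱ_{bb}`. Then `n² Γ_{ab} Γ_{ba} = (∑ rᵢ)(∑ rᵢ⁻¹) = ∑_{i,j} rᵢ / rⱼ`, and
pairing the `(i, j)` and `(j, i)` terms with `t + t⁻¹ ≥ 2` (strict for `t ≠ 1`) shows that this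
exceeds `n²` unless `r` is constant, i.e. unless the two columns are proportional.

On the off-diagonal pair `(a, b), (b, a)` the operator `H̃` acts by the `2 × 2` matrix
`[[Γ_{ab}, 1], [1, Γ_{ba}]]`, which is positive definite with nonzero determinant exactly because
`Γ_{ab} > 0` and `Γ_{ab} Γ_{ba} > 1`, while on diagonal entries it vanishes since `Γ_{aa} = 1`.
-/

open Matrix

lemma sum_sum_pos_of_add_swap {ι α : Type*} [Fintype ι] [AddCommMonoid α] [LinearOrder α]
    [IsOrderedCancelAddMonoid α] (f : ι → ι → α) (hnonneg : ∀ i j, 0 ≤ f i j + f j i)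
    (hpos : ∃ i j, 0 < f i j + f j i) :
    0 < ∑ i, ∑ j, f i j := by
  obtain ⟨i₀, j₀, h₀⟩ := hpos
  have hsymm : 0 < ∑ i, ∑ j, (f i j + f j i) :=
    Finset.sum_pos' (fun i _ => Finset.sum_nonneg fun j _ => hnonneg i j)
      ⟨i₀, Finset.mem_univ _, Finset.sum_pos' (fun j _ => hnonneg i₀ j) ⟨j₀, Finset.mem_univ _, h₀⟩⟩
  simp only [Finset.sum_add_distrib] at hsymm
  rw [Finset.sum_comm (f := fun i j => f j i)] at hsymm
  by_contra! h
  exact absurd hsymm (not_lt.mpr (add_nonpos h h))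

lemma two_le_div_add_div {x y : ℝ} (hx : 0 < x) (hy : 0 < y) : 2 ≤ x / y + y / x := by
  rw [div_add_div _ _ hy.ne' hx.ne', le_div_iff₀ (mul_pos hy hx)]
  nlinarith [sq_nonneg (x - y)]

lemma two_lt_div_add_div {x y : ℝ} (hx : 0 < x) (hy : 0 < y) (hxy : x ≠ y) :
    2 < x / y + y / x := by
  rw [div_add_div _ _ hy.ne' hx.ne', lt_div_iff₀ (mul_pos hy hx)]
  nlinarith [sq_pos_of_ne_zero (sub_ne_zero.mpr hxy)]

lemma card_sq_lt_sum_mul_sum_inv {ι : Type*} [Fintype ι] {r : ι → ℝ} (hr : ∀ i, 0 < r i)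
    (hne : ∃ i j, r i ≠ r j) :
    (Fintype.card ι : ℝ) ^ 2 < (∑ i, r i) * ∑ i, (r i)⁻¹ := by
  have hexpand : ∑ i, ∑ j, (r i / r j - 1) = (∑ i, r i) * (∑ i, (r i)⁻¹) - Fintype.card ι ^ 2 := by
    simp [Finset.sum_sub_distrib, Finset.sum_mul_sum, div_eq_mul_inv, sq]
  have hpos : 0 < ∑ i, ∑ j, (r i / r j - 1) := by
    refine sum_sum_pos_of_add_swap _ (fun i j => ?_) ?_
    · linarith [two_le_div_add_div (hr i) (hr j)]
    · obtain ⟨i, j, hij⟩ := hne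
      exact ⟨i, j, by linarith [two_lt_div_add_div (hr i) (hr j) hij]⟩
  linarith

lemma exists_div_ne_div_of_not_proportional {ι : Type*} {x y : ι → ℝ} (hy : ∀ i, y i ≠ 0)
    (hxy : ¬ ∃ c : ℝ, ∀ i, x i = c * y i) : ∃ i j, x i / y i ≠ x j / y j := by
  by_contra! hconst
  apply hxy
  rcases isEmpty_or_nonempty ι with hι | ⟨⟨i₀⟩⟩
  · exact ⟨0, isEmptyElim⟩
  · exact ⟨x i₀ / y i₀, fun i => by rw [hconst i₀ i, div_mul_cancel₀ _ (hy i)]⟩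

lemma one_lt_mean_div_mul_mean_div {ι : Type*} [Fintype ι] {x y : ι → ℝ} (hx : ∀ i, 0 < x i)
    (hy : ∀ i, 0 < y i) (hxy : ¬ ∃ c : ℝ, ∀ i, x i = c * y i) :
    1 < ((1 / Fintype.card ι : ℝ) * ∑ i, y i / x i) *
      ((1 / Fintype.card ι : ℝ) * ∑ i, x i / y i) := by
  obtain ⟨i, j, hij⟩ := exists_div_ne_div_of_not_proportional (fun i => (hy i).ne') hxy
  have hcard := card_sq_lt_sum_mul_sum_inv (fun i => div_pos (hx i) (hy i)) ⟨i, j, hij⟩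
  have : Nonempty ι := ⟨i⟩
  simp only [inv_div] at hcard
  rw [show ((1 / Fintype.card ι : ℝ) * ∑ i, y i / x i) * ((1 / Fintype.card ι : ℝ) * ∑ i, x i / y i)
      = (∑ i, x i / y i) * (∑ i, y i / x i) / (Fintype.card ι : ℝ) ^ 2 by ring,
    one_lt_div (by positivity)]
  exact hcard

lemma eq_zero_of_mul_add_eq_zero {g₁ g₂ x y : ℝ} (hg : g₁ * g₂ ≠ 1) (h₁ : g₁ * x + y = 0)
    (h₂ : g₂ * y + x = 0) : x = 0 := by
  have : (g₁ * g₂ - 1) * x = 0 := by linear_combination g₂ * h₁ - h₂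
  exact (mul_eq_zero.mp this).resolve_left (sub_ne_zero.mpr hg)

lemma mul_sq_add_mul_sq_add_two_mul_nonneg {g₁ g₂ : ℝ} (hg₁ : 0 < g₁) (hg : 1 < g₁ * g₂)
    (x y : ℝ) : 0 ≤ g₁ * x ^ 2 + g₂ * y ^ 2 + 2 * (x * y) := by
  refine (mul_nonneg_iff_of_pos_left hg₁).mp ?_
  have hsq : g₁ * (g₁ * x ^ 2 + g₂ * y ^ 2 + 2 * (x * y))
      = (g₁ * x + y) ^ 2 + (g₁ * g₂ - 1) * y ^ 2 := by ring
  rw [hsq]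
  exact add_nonneg (sq_nonneg _) (mul_nonneg (sub_nonneg.mpr hg.le) (sq_nonneg y))

lemma mul_sq_add_mul_sq_add_two_mul_pos {g₁ g₂ : ℝ} (hg₁ : 0 < g₁) (hg : 1 < g₁ * g₂)
    {x : ℝ} (hx : x ≠ 0) (y : ℝ) : 0 < g₁ * x ^ 2 + g₂ * y ^ 2 + 2 * (x * y) := by
  have hg₂ : 0 < g₂ := (pos_iff_pos_of_mul_pos (by linarith)).mp hg₁
  refine (mul_pos_iff_of_pos_left hg₂).mp ?_
  have hsq : g₂ * (g₁ * x ^ 2 + g₂ * y ^ 2 + 2 * (x * y))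
      = (g₂ * y + x) ^ 2 + (g₁ * g₂ - 1) * x ^ 2 := by ring
  rw [hsq]
  exact add_pos_of_nonneg_of_pos (sq_nonneg _) (mul_pos (sub_pos.mpr hg) (by positivity))

section ApproxHessian

variable {ι : Type*} [DecidableEq ι] (Γ : ι → ι → ℝ)

def approxHessian (M : Matrix ι ι ℝ) : Matrix ι ι ℝ :=
  Matrix.of fun a b => Γ a b * M a b + (1 - 2 * (if a = b then 1 else 0)) * M b a

lemma approxHessian_apply_self (M : Matrix ι ι ℝ) (a : ι) :
    approxHessian Γ M a a = (Γ a a - 1) * M a a := by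
  simp only [approxHessian, of_apply, if_pos]
  ring

lemma approxHessian_apply_of_ne (M : Matrix ι ι ℝ) {a b : ι} (hab : a ≠ b) :
    approxHessian Γ M a b = Γ a b * M a b + M b a := by
  simp [approxHessian, hab]

lemma approxHessian_eq_zero_iff (hdiag : ∀ a, Γ a a = 1)
    (hdet : ∀ a b, a ≠ b → Γ a b * Γ b a ≠ 1) (M : Matrix ι ι ℝ) :
    approxHessian Γ M = 0 ↔ M.IsDiag := by
  constructor
  · intro h a b hab
    have h₁ : Γ a b * M a b + M b a = 0 := by
      rw [← approxHessian_apply_of_ne Γ M hab, h, Matrix.zero_apply]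
    have h₂ : Γ b a * M b a + M a b = 0 := by
      rw [← approxHessian_apply_of_ne Γ M hab.symm, h, Matrix.zero_apply]
    exact eq_zero_of_mul_add_eq_zero (hdet a b hab) h₁ h₂
  · intro hM
    ext a b
    rcases eq_or_ne a b with rfl | hab
    · simp [approxHessian_apply_self, hdiag]
    · simp [approxHessian_apply_of_ne Γ M hab, hM hab, hM hab.symm]

lemma sum_approxHessian_mul_pos [Fintype ι] (hpos : ∀ a b, a ≠ b → 0 < Γ a b)
    (hmul : ∀ a b, a ≠ b → 1 < Γ a b * Γ b a) {M : Matrix ι ι ℝ} (hM : ∀ a, M a a = 0)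
    (hM₀ : M ≠ 0) : 0 < ∑ a, ∑ b, approxHessian Γ M a b * M a b := by
  obtain ⟨a₀, b₀, hab₀⟩ : ∃ a b, M a b ≠ 0 := by
    by_contra! h
    exact hM₀ (Matrix.ext h)
  have hne₀ : a₀ ≠ b₀ := fun h => hab₀ (h ▸ hM a₀)
  have hpair : ∀ a b, a ≠ b →
      approxHessian Γ M a b * M a b + approxHessian Γ M b a * M b a
        = Γ a b * M a b ^ 2 + Γ b a * M b a ^ 2 + 2 * (M a b * M b a) := by
    intro a b hab
    rw [approxHessian_apply_of_ne Γ M hab, approxHessian_apply_of_ne Γ M hab.symm]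
    ring
  refine sum_sum_pos_of_add_swap _ (fun a b => ?_) ⟨a₀, b₀, ?_⟩
  · rcases eq_or_ne a b with rfl | hab
    · simp [hM]
    · rw [hpair a b hab]
      exact mul_sq_add_mul_sq_add_two_mul_nonneg (hpos a b hab) (hmul a b hab) _ _
  · rw [hpair a₀ b₀ hne₀]
    exact mul_sq_add_mul_sq_add_two_mul_pos (hpos a₀ b₀ hne₀) (hmul a₀ b₀ hne₀) hab₀ _

end ApproxHessian

theorem stmt13 {p n : ℕ} (hn : 0 < n) (d : Fin n → Fin p → ℝ)
    (hd : ∀ i a, 0 < d i a)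
    (hprop : ∀ a b : Fin p, a ≠ b → ¬ ∃ c : ℝ, ∀ i, d i a = c * d i b)
    (Γ : Fin p → Fin p → ℝ)
    (hΓ : ∀ a b, Γ a b = (1 / n : ℝ) * ∑ i, d i b / d i a)
    (Ht : Matrix (Fin p) (Fin p) ℝ → Matrix (Fin p) (Fin p) ℝ)
    (hHt : ∀ M a b, Ht M a b =
      Γ a b * M a b + (1 - 2 * (if a = b then 1 else 0)) * M b a) :
    (∀ a b : Fin p, a ≠ b → 1 < Γ a b * Γ b a) ∧
    (∀ M : Matrix (Fin p) (Fin p) ℝ, Ht M = 0 ↔ M.IsDiag) ∧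
    (∀ M : Matrix (Fin p) (Fin p) ℝ, (∀ a, M a a = 0) → M ≠ 0 →
      0 < ∑ a, ∑ b, Ht M a b * M a b) := by
  obtain rfl : Ht = approxHessian Γ := funext fun M => Matrix.ext (hHt M)
  have hn' : (n : ℝ) ≠ 0 := by positivity
  have hΓpos : ∀ a b, 0 < Γ a b := fun a b => by
    rw [hΓ]
    have : Nonempty (Fin n) := ⟨⟨0, hn⟩⟩
    exact mul_pos (by positivity)
      (Finset.sum_pos (fun i _ => div_pos (hd i b) (hd i a)) Finset.univ_nonempty)
  have hΓdiag : ∀ a, Γ a a = 1 := fun a => by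
    simp [hΓ, div_self (hd _ a).ne', hn']
  have hΓmul : ∀ a b, a ≠ b → 1 < Γ a b * Γ b a := fun a b hab => by
    simpa only [hΓ, Fintype.card_fin] using
      one_lt_mean_div_mul_mean_div (fun i => hd i a) (fun i => hd i b) (hprop a b hab)
  exact ⟨hΓmul, approxHessian_eq_zero_iff Γ hΓdiag fun a b hab => (hΓmul a b hab).ne',
    fun M => sum_approxHessian_mul_pos Γ (fun a b _ => hΓpos a b) hΓmul⟩
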